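/- There is an absolute constant C > 0 such that the following holds. Let A = (A^{(1)},…,A^{(R)}) and B = (B^{(1)},…,B^{(R)}) be families of mutually independent random vectors, where A^{(i)} and B^{(i)} take values in [−1,1]^{k_i}, and suppose that for every i ∈ [R] the ensembles A^{(i)} and B^{(i)} have matching moments up to degree 3. Let l = (l^{(1)},…,l^{(R)}) with l^{(i)} ∈ ℝ^{k_i} and l(x) = Σ_{i∈[R]} ⟨l^{(i)}, x^{(i)}⟩. For 0 < α < 1/2 define the spread function c(α) = max( sup_θ Pr[l(A) ∈ [θ−α, θ+α]], sup_θ Pr[l(B) ∈ [θ−α, θ+α]] ). Then for every θ ∈ ℝ and every 0 < α < 1/2, |E[sgn(l(A) − θ)] − E[sgn(l(B) − θ)]| ≤ (C/α⁴) · Σ_{i∈[R]} ‖l^{(i)}‖₁⁴ + 2·c(α). -/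

import Mathlib

/-!
Lindeberg replacement. Replace `sgn (t - θ)` by the smooth step
`ψ t = smoothTransition ((t - (θ - α)) / (2α))`, which agrees with it outside `[θ - α, θ + α]`;
under either ensemble this costs at most the spread `c(α)`. For `ψ`, swap the blocks `A⁽ⁱ⁾` for
`B⁽ⁱ⁾` one at a time. With the other blocks frozen at `b`, the third-order Taylor polynomial of
`ψ` at `b` has the same expectation under `A⁽ⁱ⁾` and `B⁽ⁱ⁾` (matching moments up to degree 3),
while the remainder is at most `K |⟨l⁽ⁱ⁾, x⁽ⁱ⁾⟩|⁴ / (2α)⁴ ≤ K ‖l⁽ⁱ⁾‖₁⁴ / (2α)⁴`, where `K` is a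
Lipschitz constant of the third derivative of `smoothTransition`. That constant exists because
this derivative is smooth with compact support, and it depends on nothing, so `C` is absolute.
-/

open MeasureTheory
open scoped ENNReal

noncomputable section

/-- The sign function valued in `{0,1}`: `sgn01 t = 1` iff `t ≥ 0`. -/
def sgn01 (t : ℝ) : ℝ := if 0 ≤ t then 1 else 0

open Finset Nat in
theorem hasDerivAt_sum_range_div_factorial_mul_pow (c : ℕ → ℝ) (n : ℕ) (u : ℝ) :
    HasDerivAt (fun u => ∑ m ∈ range (n + 1), c m / m ! * u ^ m)
      (∑ m ∈ range n, c (m + 1) / m ! * u ^ m) u := by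
  refine (HasDerivAt.fun_sum (u := range (n + 1))
    fun m _ => (hasDerivAt_pow m u).const_mul (c m / m !)).congr_deriv ?_
  rw [sum_range_succ']
  simp only [CharP.cast_eq_zero, zero_mul, mul_zero, add_zero, add_tsub_cancel_right]
  refine sum_congr rfl fun m _ => ?_
  rw [factorial_succ]
  push_cast
  field_simp

theorem abs_le_mul_abs_pow_succ_of_hasDerivAt {g g' : ℝ → ℝ} {C : ℝ} {n : ℕ}
    (hg : ∀ u, HasDerivAt g (g' u) u) (hg0 : g 0 = 0) (hg' : ∀ u, |g' u| ≤ C * |u| ^ n)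
    (s : ℝ) : |g s| ≤ C * |s| ^ (n + 1) := by
  have hC : 0 ≤ C := by simpa using (abs_nonneg _).trans (hg' 1)
  have hball : ∀ u ∈ Metric.closedBall (0 : ℝ) |s|, ‖g' u‖ ≤ C * |s| ^ n := fun u hu =>
    (hg' u).trans <| mul_le_mul_of_nonneg_left
      (pow_le_pow_left₀ (abs_nonneg u) (by simpa using hu) n) hC
  have := (convex_closedBall (0 : ℝ) |s|).norm_image_sub_le_of_norm_hasDerivWithin_le
    (fun u _ => (hg u).hasDerivWithinAt) hball (Metric.mem_closedBall_self (abs_nonneg s))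
    (by simp : s ∈ Metric.closedBall (0 : ℝ) |s|)
  simpa [hg0, pow_succ, mul_assoc] using this

open Finset Nat in
theorem abs_sub_taylor_le_of_lipschitzWith_iteratedDeriv {n : ℕ} {f : ℝ → ℝ} {K : NNReal}
    (hf : ContDiff ℝ n f) (hK : LipschitzWith K (iteratedDeriv n f)) (b s : ℝ) :
    |f (b + s) - ∑ m ∈ range (n + 1), iteratedDeriv m f b / m ! * s ^ m|
      ≤ K * |s| ^ (n + 1) := by
  induction n generalizing f s with
  | zero =>
    simpa [Real.dist_eq] using hK.dist_le_mul (b + s) b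
  | succ n ih =>
    obtain ⟨hdiff, -, hf'⟩ :=
      contDiff_succ_iff_deriv.mp (by exact_mod_cast hf : ContDiff ℝ (n + 1) f)
    rw [iteratedDeriv_succ'] at hK
    refine abs_le_mul_abs_pow_succ_of_hasDerivAt
      (g := fun u => f (b + u) - ∑ m ∈ range (n + 2), iteratedDeriv m f b / m ! * u ^ m)
      (fun u => ?_) (by simp [sum_range_succ']) (ih hf' hK) s
    have := ((hdiff (b + u)).hasDerivAt.comp_const_add b u).fun_sub
      (hasDerivAt_sum_range_div_factorial_mul_pow (fun m => iteratedDeriv m f b) (n + 1) u)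
    simpa only [iteratedDeriv_succ'] using this

open Filter Topology in
theorem Real.smoothTransition.exists_lipschitzWith_iteratedDeriv_succ (n : ℕ) :
    ∃ K, LipschitzWith K (iteratedDeriv (n + 1) Real.smoothTransition) := by
  have hconst : ∀ x c, Real.smoothTransition =ᶠ[𝓝 x] (fun _ => c) →
      iteratedDeriv (n + 1) Real.smoothTransition x = 0 := fun x c h => by
    simp [h.iteratedDeriv_eq, iteratedDeriv_const]
  have hsupp : HasCompactSupport (iteratedDeriv (n + 1) Real.smoothTransition) := by
    refine HasCompactSupport.intro (isCompact_Icc (a := (0 : ℝ)) (b := 1)) fun x hx => ?_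
    rcases not_and_or.mp hx with hx | hx
    · exact hconst x 0 <| eventually_of_mem (Iio_mem_nhds (not_le.mp hx)) fun y hy =>
        Real.smoothTransition.zero_of_nonpos (le_of_lt hy)
    · exact hconst x 1 <| eventually_of_mem (Ioi_mem_nhds (not_le.mp hx)) fun y hy =>
        Real.smoothTransition.one_of_one_le (le_of_lt hy)
  have hsmooth : ContDiff ℝ 1 (iteratedDeriv (n + 1) Real.smoothTransition) := by
    rw [iteratedDeriv_eq_iterate]
    exact (Real.smoothTransition.contDiff.iterate_deriv _).of_le (by exact_mod_cast le_top)
  exact hsmooth.lipschitzWith_of_hasCompactSupport hsupp one_ne_zero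

theorem Real.smoothTransition.abs_le_one (t : ℝ) : |Real.smoothTransition t| ≤ 1 :=
  abs_le.mpr ⟨by linarith [Real.smoothTransition.nonneg t], Real.smoothTransition.le_one t⟩

theorem Continuous.integrable_comp_of_ae_abs_le {Ω : Type*} [MeasurableSpace Ω]
    {μ : Measure Ω} [IsFiniteMeasure μ] {f : ℝ → ℝ} (hf : Continuous f) {s : Ω → ℝ}
    (hs : Measurable s) {L : ℝ} (hL : ∀ᵐ ω ∂μ, |s ω| ≤ L) :
    Integrable (fun ω => f (s ω)) μ := by
  obtain ⟨C, hC⟩ := (isCompact_Icc (a := -L) (b := L)).exists_bound_of_continuousOn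
    hf.continuousOn
  exact .of_bound (hf.measurable.comp hs).aestronglyMeasurable C <| by
    filter_upwards [hL] with ω hω using hC _ (abs_le.mp hω)

theorem abs_integral_sub_integral_le_of_abs_sub_le {α : Type*} [MeasurableSpace α]
    {μ : Measure α} [IsProbabilityMeasure μ] {g h : α → ℝ} (hg : Integrable g μ)
    (hh : Integrable h μ) {C : ℝ} (hC : ∀ x, |g x - h x| ≤ C) :
    |∫ x, g x ∂μ - ∫ x, h x ∂μ| ≤ C := by
  rw [← integral_sub hg hh]
  simpa using norm_integral_le_of_norm_le_const (μ := μ)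
    (ae_of_all _ fun x => (Real.norm_eq_abs (g x - h x)).trans_le (hC x))

theorem abs_integral_sub_integral_le_measureReal {Ω : Type*} [MeasurableSpace Ω]
    {μ : Measure Ω} [IsFiniteMeasure μ] {u w : Ω → ℝ} (hu : Integrable u μ)
    (hw : Integrable w μ) {S : Set Ω} (hS : MeasurableSet S) (hle : ∀ x, |u x - w x| ≤ 1)
    (heq : ∀ x ∉ S, u x = w x) :
    |∫ x, u x ∂μ - ∫ x, w x ∂μ| ≤ μ.real S := by
  rw [← integral_sub hu hw, ← integral_indicator_one hS]
  refine abs_integral_le_integral_abs.trans <|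
    integral_mono (hu.sub hw).abs ((integrable_const 1).indicator hS) fun x => ?_
  by_cases hx : x ∈ S
  · simpa [hx] using hle x
  · simp [hx, heq x hx]

open Finset Nat in
theorem abs_integral_sub_taylor_le {Ω : Type*} [MeasurableSpace Ω] {μ : Measure Ω}
    [IsProbabilityMeasure μ] {n : ℕ} {f : ℝ → ℝ} {K : NNReal} (hf : ContDiff ℝ n f)
    (hK : LipschitzWith K (iteratedDeriv n f)) {s : Ω → ℝ} (hs : Measurable s) {L : ℝ}
    (hL : ∀ᵐ ω ∂μ, |s ω| ≤ L) (b : ℝ) :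
    |∫ ω, f (b + s ω) ∂μ - ∑ m ∈ range (n + 1), iteratedDeriv m f b / m ! * ∫ ω, s ω ^ m ∂μ|
      ≤ K * L ^ (n + 1) := by
  have hpow (m : ℕ) : Integrable (fun ω => s ω ^ m) μ :=
    (continuous_pow m).integrable_comp_of_ae_abs_le hs hL
  have hfs : Integrable (fun ω => f (b + s ω)) μ :=
    (hf.continuous.comp (continuous_const_add b)).integrable_comp_of_ae_abs_le hs hL
  simp_rw [← integral_const_mul]
  rw [← integral_finsetSum _ fun m _ => (hpow m).const_mul _,
    ← integral_sub hfs (integrable_finsetSum _ fun m _ => (hpow m).const_mul _)]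
  have hR : ∀ᵐ ω ∂μ,
      ‖f (b + s ω) - ∑ m ∈ range (n + 1), iteratedDeriv m f b / m ! * s ω ^ m‖
        ≤ K * L ^ (n + 1) := by
    filter_upwards [hL] with ω hω
    refine (abs_sub_taylor_le_of_lipschitzWith_iteratedDeriv hf hK b (s ω)).trans ?_
    gcongr
  simpa using norm_integral_le_of_norm_le_const hR

theorem ae_abs_le_one_of_measure_eq_one {ι : Type*} [Fintype ι] {ρ : Measure (ι → ℝ)}
    [IsProbabilityMeasure ρ] (h : ρ {v | ∀ j, |v j| ≤ 1} = 1) :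
    ∀ᵐ v ∂ρ, ∀ j, |v j| ≤ 1 := by
  have hmeas : MeasurableSet {v : ι → ℝ | ∀ j, |v j| ≤ 1} := by
    simp only [Set.ofPred_forall]
    exact .iInter fun j => measurableSet_le (by fun_prop) measurable_const
  rwa [ae_iff_measure_eq hmeas.nullMeasurableSet, measure_univ]

section Moments

variable {ι : Type*} [Fintype ι]

theorem ae_abs_sum_mul_le {ρ : Measure (ι → ℝ)} (hρ : ∀ᵐ v ∂ρ, ∀ j, |v j| ≤ 1) (l : ι → ℝ) :
    ∀ᵐ v ∂ρ, |∑ j, l j * v j| ≤ ∑ j, |l j| := by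
  filter_upwards [hρ] with v hv
  refine (Finset.abs_sum_le_sum_abs _ _).trans (Finset.sum_le_sum fun j _ => ?_)
  rw [abs_mul]
  exact mul_le_of_le_one_right (abs_nonneg _) (hv j)

theorem integral_sum_mul_pow {ρ : Measure (ι → ℝ)} [IsFiniteMeasure ρ]
    (hρ : ∀ᵐ v ∂ρ, ∀ j, |v j| ≤ 1) (l : ι → ℝ) (m : ℕ) :
    ∫ v, (∑ j, l j * v j) ^ m ∂ρ =
      ∑ g : Fin m → ι, (∏ t, l (g t)) * ∫ v, ((Finset.univ.val.map g).map v).prod ∂ρ := by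
  have hmono : ∀ g : Fin m → ι, Integrable (fun v : ι → ℝ => ∏ t, v (g t)) ρ := fun g =>
    .of_bound (Finset.measurable_prod _ fun t _ => measurable_pi_apply (g t)).aestronglyMeasurable
      1 <| by
      filter_upwards [hρ] with v hv
      rw [Real.norm_eq_abs, Finset.abs_prod]
      exact Finset.prod_le_one (fun _ _ => abs_nonneg _) fun t _ => hv (g t)
  simp_rw [Finset.sum_pow', Fintype.piFinset_univ, Finset.prod_mul_distrib]
  rw [integral_finsetSum _ fun g _ => (hmono g).const_mul _]
  simp_rw [integral_const_mul, Multiset.map_map, Finset.prod_eq_multiset_prod]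
  rfl

theorem integral_sum_mul_pow_eq_of_moments_eq {ρA ρB : Measure (ι → ℝ)}
    [IsFiniteMeasure ρA] [IsFiniteMeasure ρB]
    (hA : ∀ᵐ v ∂ρA, ∀ j, |v j| ≤ 1) (hB : ∀ᵐ v ∂ρB, ∀ j, |v j| ≤ 1) {n : ℕ}
    (hmom : ∀ S : Multiset ι, Multiset.card S ≤ n →
      ∫ v, (S.map v).prod ∂ρA = ∫ v, (S.map v).prod ∂ρB)
    (l : ι → ℝ) {m : ℕ} (hm : m ≤ n) :
    ∫ v, (∑ j, l j * v j) ^ m ∂ρA = ∫ v, (∑ j, l j * v j) ^ m ∂ρB := by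
  rw [integral_sum_mul_pow hA, integral_sum_mul_pow hB]
  refine Finset.sum_congr rfl fun g _ => congrArg _ (hmom _ ?_)
  simpa using hm

theorem abs_integral_sub_integral_le_of_moments_eq {ρA ρB : Measure (ι → ℝ)}
    [IsProbabilityMeasure ρA] [IsProbabilityMeasure ρB]
    (hA : ∀ᵐ v ∂ρA, ∀ j, |v j| ≤ 1) (hB : ∀ᵐ v ∂ρB, ∀ j, |v j| ≤ 1) {n : ℕ}
    (hmom : ∀ S : Multiset ι, Multiset.card S ≤ n →
      ∫ v, (S.map v).prod ∂ρA = ∫ v, (S.map v).prod ∂ρB)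
    {f : ℝ → ℝ} {K : NNReal} (hf : ContDiff ℝ n f) (hK : LipschitzWith K (iteratedDeriv n f))
    (l : ι → ℝ) (b : ℝ) :
    |∫ v, f (b + ∑ j, l j * v j) ∂ρA - ∫ v, f (b + ∑ j, l j * v j) ∂ρB|
      ≤ 2 * K * (∑ j, |l j|) ^ (n + 1) := by
  have hs : Measurable fun v : ι → ℝ => ∑ j, l j * v j := by fun_prop
  have hTA := abs_integral_sub_taylor_le hf hK hs (ae_abs_sum_mul_le hA l) b
  have hTB := abs_integral_sub_taylor_le hf hK hs (ae_abs_sum_mul_le hB l) b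
  have hmoments : ∀ m ∈ Finset.range (n + 1),
      ∫ v, (∑ j, l j * v j) ^ m ∂ρA = ∫ v, (∑ j, l j * v j) ^ m ∂ρB := fun m hm =>
    integral_sum_mul_pow_eq_of_moments_eq hA hB hmom l
      (Nat.lt_succ_iff.mp (Finset.mem_range.mp hm))
  rw [Finset.sum_congr rfl fun m hm => by rw [hmoments m hm]] at hTA
  rw [abs_sub_comm] at hTB
  exact ((abs_sub_le _ _ _).trans (add_le_add hTA hTB)).trans_eq (by ring)

end Moments

theorem abs_integral_pi_sub_integral_pi_le_sum {R : ℕ} {X : Fin R → Type*}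
    [∀ i, MeasurableSpace (X i)] (μ ν : ∀ i, Measure (X i))
    [∀ i, IsProbabilityMeasure (μ i)] [∀ i, IsProbabilityMeasure (ν i)]
    {f : ∀ i, X i → ℝ} (hf : ∀ i, Measurable (f i)) {Φ : ℝ → ℝ} (hΦ : Measurable Φ) {M : ℝ}
    (hΦM : ∀ t, |Φ t| ≤ M) (ε : Fin R → ℝ)
    (hε : ∀ i b, |∫ x, Φ (b + f i x) ∂μ i - ∫ x, Φ (b + f i x) ∂ν i| ≤ ε i) (b : ℝ) :
    |∫ x, Φ (b + ∑ i, f i (x i)) ∂Measure.pi μ - ∫ x, Φ (b + ∑ i, f i (x i)) ∂Measure.pi ν|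
      ≤ ∑ i, ε i := by
  induction R generalizing b with
  | zero => simp
  | succ n ih =>
    let F : X 0 × (∀ i : Fin n, X (Fin.succAbove 0 i)) → ℝ :=
      fun z => Φ (b + f 0 z.1 + ∑ i, f (Fin.succAbove 0 i) (z.2 i))
    have hF : Measurable F := by fun_prop
    have hFint (μ₀ : Measure (X 0)) (π : Measure (∀ i : Fin n, X (Fin.succAbove 0 i)))
        [IsProbabilityMeasure μ₀] [IsProbabilityMeasure π] : Integrable F (μ₀.prod π) :=
      .of_bound hF.aestronglyMeasurable M (ae_of_all _ fun z => hΦM _)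
    have hsplit (ρ : ∀ i, Measure (X i)) [∀ i, IsProbabilityMeasure (ρ i)] :
        ∫ x, Φ (b + ∑ i, f i (x i)) ∂Measure.pi ρ
          = ∫ z, F z ∂(ρ 0).prod (Measure.pi fun i => ρ (Fin.succAbove 0 i)) := by
      rw [← (measurePreserving_piFinSuccAbove ρ 0).integral_comp' F]
      simp [F, Fin.sum_univ_succAbove _ 0, add_assoc]
      rfl
    rw [hsplit μ, hsplit ν, Fin.sum_univ_succAbove _ 0]
    set μ' := Measure.pi fun i => μ (Fin.succAbove 0 i)
    set ν' := Measure.pi fun i => ν (Fin.succAbove 0 i)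
    -- pass through the hybrid `(μ 0).prod ν'`: first swap the blocks `succAbove 0 i` with `x 0`
    -- frozen (induction), then swap block `0` with the others frozen
    have hswapRest : |∫ x, ∫ y, F (x, y) ∂μ' ∂μ 0 - ∫ x, ∫ y, F (x, y) ∂ν' ∂μ 0|
        ≤ ∑ i, ε (Fin.succAbove 0 i) :=
      abs_integral_sub_integral_le_of_abs_sub_le (hFint _ _).integral_prod_left
        (hFint _ _).integral_prod_left fun x =>
          ih _ _ (fun i => hf _) _ (fun i => hε _) (b + f 0 x)
    have hswap0 : |∫ y, ∫ x, F (x, y) ∂μ 0 ∂ν' - ∫ y, ∫ x, F (x, y) ∂ν 0 ∂ν'| ≤ ε 0 :=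
      abs_integral_sub_integral_le_of_abs_sub_le (hFint _ _).integral_prod_right
        (hFint _ _).integral_prod_right fun y => by
          simpa only [F, add_right_comm b] using hε 0 (b + ∑ i, f (Fin.succAbove 0 i) (y i))
    rw [← integral_prod_symm F (hFint (μ 0) ν'), integral_prod F (hFint (μ 0) ν')] at hswap0
    rw [integral_prod F (hFint _ _), integral_prod_symm F (hFint _ _)]
    exact (abs_sub_le _ _ _).trans ((add_le_add hswapRest hswap0).trans_eq (add_comm _ _))

theorem abs_integral_pi_sub_integral_pi_le_of_moments_eq {R : ℕ} {ι : Fin R → Type*}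
    [∀ i, Fintype (ι i)] (νA νB : ∀ i, Measure (ι i → ℝ))
    [∀ i, IsProbabilityMeasure (νA i)] [∀ i, IsProbabilityMeasure (νB i)]
    (hA : ∀ i, ∀ᵐ v ∂νA i, ∀ j, |v j| ≤ 1) (hB : ∀ i, ∀ᵐ v ∂νB i, ∀ j, |v j| ≤ 1) {n : ℕ}
    (hmom : ∀ i, ∀ S : Multiset (ι i), Multiset.card S ≤ n →
      ∫ v, (S.map v).prod ∂νA i = ∫ v, (S.map v).prod ∂νB i)
    {Φ : ℝ → ℝ} {K : NNReal} (hΦ : ContDiff ℝ n Φ) (hK : LipschitzWith K (iteratedDeriv n Φ))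
    {M : ℝ} (hΦM : ∀ t, |Φ t| ≤ M) (l : ∀ i, ι i → ℝ) (b : ℝ) :
    |∫ x, Φ (b + ∑ i, ∑ j, l i j * x i j) ∂Measure.pi νA
        - ∫ x, Φ (b + ∑ i, ∑ j, l i j * x i j) ∂Measure.pi νB|
      ≤ ∑ i, 2 * K * (∑ j, |l i j|) ^ (n + 1) :=
  abs_integral_pi_sub_integral_pi_le_sum νA νB (f := fun i v => ∑ j, l i j * v j)
    (fun i => by fun_prop) hΦ.continuous.measurable hΦM _
    (fun i => abs_integral_sub_integral_le_of_moments_eq (hA i) (hB i) (hmom i) hΦ hK (l i)) b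

theorem abs_integral_pi_smoothTransition_sub_le {R : ℕ} {ι : Fin R → Type*}
    [∀ i, Fintype (ι i)] (νA νB : ∀ i, Measure (ι i → ℝ))
    [∀ i, IsProbabilityMeasure (νA i)] [∀ i, IsProbabilityMeasure (νB i)]
    (hA : ∀ i, ∀ᵐ v ∂νA i, ∀ j, |v j| ≤ 1) (hB : ∀ i, ∀ᵐ v ∂νB i, ∀ j, |v j| ≤ 1)
    (hmom : ∀ i, ∀ S : Multiset (ι i), Multiset.card S ≤ 3 →
      ∫ v, (S.map v).prod ∂νA i = ∫ v, (S.map v).prod ∂νB i)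
    {K : NNReal} (hK : LipschitzWith K (iteratedDeriv 3 Real.smoothTransition))
    (l : ∀ i, ι i → ℝ) (c : ℝ) {d : ℝ} (hd : 0 < d) :
    |∫ x, Real.smoothTransition ((∑ i, ∑ j, l i j * x i j - c) / d) ∂Measure.pi νA
        - ∫ x, Real.smoothTransition ((∑ i, ∑ j, l i j * x i j - c) / d) ∂Measure.pi νB|
      ≤ 2 * K / d ^ 4 * ∑ i, (∑ j, |l i j|) ^ 4 := by
  have harg (x : ∀ i, ι i → ℝ) :
      (∑ i, ∑ j, l i j * x i j - c) / d = -(c / d) + ∑ i, ∑ j, l i j / d * x i j := by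
    simp only [div_mul_eq_mul_div, ← Finset.sum_div]
    ring
  simp only [harg]
  refine (abs_integral_pi_sub_integral_pi_le_of_moments_eq νA νB hA hB hmom
    Real.smoothTransition.contDiff hK Real.smoothTransition.abs_le_one _ _).trans_eq ?_
  simp only [abs_div, abs_of_pos hd, ← Finset.sum_div, div_pow, Finset.mul_sum]
  exact Finset.sum_congr rfl fun i _ => by ring

theorem measurable_sgn01 : Measurable sgn01 :=
  Measurable.ite (measurableSet_le measurable_const measurable_id) measurable_const
    measurable_const

theorem abs_sgn01_le_one (t : ℝ) : |sgn01 t| ≤ 1 := by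
  unfold sgn01
  split_ifs <;> simp

theorem abs_sgn01_sub_smoothTransition_le_one (t u : ℝ) :
    |sgn01 t - Real.smoothTransition u| ≤ 1 := by
  have := Real.smoothTransition.nonneg u
  have := Real.smoothTransition.le_one u
  unfold sgn01
  split_ifs <;> exact abs_le.mpr ⟨by linarith, by linarith⟩

theorem sgn01_sub_eq_smoothTransition {θ α t : ℝ} (hα : 0 < α)
    (ht : ¬(θ - α ≤ t ∧ t ≤ θ + α)) :
    sgn01 (t - θ) = Real.smoothTransition ((t - (θ - α)) / (2 * α)) := by
  rcases not_and_or.mp ht with ht | ht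
  · rw [Real.smoothTransition.zero_of_nonpos (div_nonpos_of_nonpos_of_nonneg (by linarith)
      (by positivity)), sgn01, if_neg (by linarith)]
  · rw [Real.smoothTransition.one_of_one_le ((one_le_div (by positivity)).mpr (by linarith)),
      sgn01, if_pos (by linarith)]

theorem abs_integral_sgn01_sub_smoothTransition_le {Ω : Type*} [MeasurableSpace Ω]
    {μ : Measure Ω} [IsProbabilityMeasure μ] {L : Ω → ℝ} (hL : Measurable L) (θ : ℝ) {α : ℝ}
    (hα : 0 < α) :
    |∫ x, sgn01 (L x - θ) ∂μ - ∫ x, Real.smoothTransition ((L x - (θ - α)) / (2 * α)) ∂μ|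
      ≤ μ.real {x | θ - α ≤ L x ∧ L x ≤ θ + α} :=
  abs_integral_sub_integral_le_measureReal
    (.of_bound (measurable_sgn01.comp (hL.sub_const θ)).aestronglyMeasurable 1
      (ae_of_all _ fun x => abs_sgn01_le_one _))
    (.of_bound (by fun_prop) 1 (ae_of_all _ fun x => Real.smoothTransition.abs_le_one _))
    ((measurableSet_le (by fun_prop) hL).inter (measurableSet_le hL (by fun_prop)))
    (fun x => abs_sgn01_sub_smoothTransition_le_one _ _)
    fun x hx => sgn01_sub_eq_smoothTransition hα hx

theorem stmt_5 :
    ∃ C : ℝ, 0 < C ∧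
      ∀ (R : ℕ) (k : Fin R → ℕ)
        (νA νB : ∀ i : Fin R, Measure (Fin (k i) → ℝ)),
        (∀ i, IsProbabilityMeasure (νA i)) → (∀ i, IsProbabilityMeasure (νB i)) →
        (∀ i, νA i {v | ∀ j, |v j| ≤ 1} = 1) →
        (∀ i, νB i {v | ∀ j, |v j| ≤ 1} = 1) →
        (∀ i : Fin R, ∀ S : Multiset (Fin (k i)), Multiset.card S ≤ 3 →
          ∫ v, (S.map v).prod ∂(νA i) = ∫ v, (S.map v).prod ∂(νB i)) →
        ∀ (l : ∀ i : Fin R, Fin (k i) → ℝ) (α θ cα : ℝ),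
          0 < α → α < 1 / 2 →
          (∀ θ' : ℝ,
            ((Measure.pi νA) {x | θ' - α ≤ (∑ i, ∑ j, l i j * x i j) ∧
                (∑ i, ∑ j, l i j * x i j) ≤ θ' + α}).toReal ≤ cα) →
          (∀ θ' : ℝ,
            ((Measure.pi νB) {x | θ' - α ≤ (∑ i, ∑ j, l i j * x i j) ∧
                (∑ i, ∑ j, l i j * x i j) ≤ θ' + α}).toReal ≤ cα) →
          |(∫ x, sgn01 ((∑ i, ∑ j, l i j * x i j) - θ) ∂(Measure.pi νA)) -
              ∫ x, sgn01 ((∑ i, ∑ j, l i j * x i j) - θ) ∂(Measure.pi νB)|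
            ≤ C / α ^ 4 * ∑ i, (∑ j, |l i j|) ^ 4 + 2 * cα := by
  obtain ⟨K, hK⟩ := Real.smoothTransition.exists_lipschitzWith_iteratedDeriv_succ 2
  refine ⟨(K + 1) / 8, by positivity, ?_⟩
  intro R k νA νB _ _ hcA hcB hmom l α θ cα hα _ hsA hsB
  have hL : Measurable fun x : (∀ i, Fin (k i) → ℝ) => ∑ i, ∑ j, l i j * x i j := by fun_prop
  have hsgnA := (abs_integral_sgn01_sub_smoothTransition_le (μ := Measure.pi νA) hL θ hα).trans
    (hsA θ)
  have hsgnB := (abs_integral_sgn01_sub_smoothTransition_le (μ := Measure.pi νB) hL θ hα).trans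
    (hsB θ)
  have hsmooth := abs_integral_pi_smoothTransition_sub_le νA νB
    (fun i => ae_abs_le_one_of_measure_eq_one (hcA i))
    (fun i => ae_abs_le_one_of_measure_eq_one (hcB i)) hmom
    (hK.weaken (le_add_of_nonneg_right zero_le_one)) l (θ - α) (by positivity : 0 < 2 * α)
  rw [abs_sub_comm] at hsgnB
  refine ((abs_sub_le _ _ _).trans (add_le_add ((abs_sub_le _ _ _).trans
    (add_le_add hsgnA hsmooth)) hsgnB)).trans_eq ?_
  push_cast
  ring
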